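/- Let p1 ∈ [0,1], λ1, λ2 ≥ 0, N ≥ 1 and 1 ≤ i1 ≤ N. For all real z1 > 0 and z2 > 0, the family (PHD(Δ1,Δ2) · z1^{Δ1} · z2^{Δ2}) indexed by (Δ1,Δ2) ∈ ℤ² is summable and Σ_{(Δ1,Δ2)∈ℤ²} PHD(Δ1,Δ2) · z1^{Δ1} · z2^{Δ2} = exp(λ1·N·(z1−1)) · exp(λ2·N·(z2−1)) · [ Σ_{m=0}^{i1−1} (N choose m)·(1−p1)^m·p1^{N−m}·z1^{−m}·z2^{m} + ( Σ_{m=i1}^{N} (N choose m)·(1−p1)^m·p1^{N−m} )·z1^{−i1}·z2^{i1} ]. (Probability generating function of the half-duplex inter-session state transition when node S1 transmits N coded packets.) -/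

import Mathlib

/-- Probability that `x` packets arrive in `b` time slots under a Poisson
arrival process of rate `lam` per slot. -/
noncomputable def arr (lam : ℝ) (b : ℕ) (x : ℤ) : ℝ :=
  if 0 ≤ x then Real.exp (-(lam * b)) * (lam * b) ^ x.toNat / (Nat.factorial x.toNat) else 0

/-- Probability of zero successful transmissions in one slot when the queue holds `i` packets. -/
noncomputable def d0 (i : ℕ) (p : ℝ) : ℝ := if i = 0 then 1 else p

/-- Probability of one successful transmission in one slot when the queue holds `i` packets. -/
noncomputable def d1 (i : ℕ) (p : ℝ) : ℝ := if i = 0 then 0 else 1 - p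

/-- Distribution of the number of useful packets delivered from `S1` to `S2`
when `S1` transmits `N` coded packets and `i1` dof are missing: binomial
probabilities for `m < i1` and the binomial upper tail lumped at `m = i1`. -/
noncomputable def dHD (p1 : ℝ) (N i1 m : ℕ) : ℝ :=
  if m < i1 then (N.choose m : ℝ) * (1 - p1) ^ m * p1 ^ (N - m)
  else ∑ k ∈ Finset.Icc i1 N, (N.choose k : ℝ) * (1 - p1) ^ k * p1 ^ (N - k)

/-- Half-duplex inter-session transition probability `PHD(Δ1, Δ2)` when node
`S1` transmits `N` coded packets from state `(i1, i2, S1)`. -/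
noncomputable def PHD (p1 lam1 lam2 : ℝ) (N i1 : ℕ) (Δ : ℤ × ℤ) : ℝ :=
  ∑ m ∈ Finset.range (i1 + 1),
    dHD p1 N i1 m * arr lam1 N (Δ.1 + (m : ℤ)) * arr lam2 N (Δ.2 - (m : ℤ))

/-!
The Poisson law `arr λ b` has generating function `exp (λ b (z - 1))`, and shifting its argument
by `m` multiplies the generating function by `z ^ (-m)`. Each of the `i1 + 1` summands of `PHD` is
a product of two such shifted laws in separate coordinates; their double series over `ℤ × ℤ`
converges because all terms are nonnegative and sums to the product of the two generating
functions. Summing over `m` and splitting off the lumped tail `m = i1` gives the formula.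
-/

open Finset
open scoped Nat

lemma arr_nonneg {lam : ℝ} (hlam : 0 ≤ lam) (b : ℕ) (x : ℤ) : 0 ≤ arr lam b x := by
  unfold arr
  split_ifs
  · positivity
  · exact le_rfl

lemma arr_natCast (lam : ℝ) (b n : ℕ) :
    arr lam b n = Real.exp (-(lam * b)) * (lam * b) ^ n / n ! := by
  simp [arr]

lemma hasSum_arr_mul_zpow (lam : ℝ) (b : ℕ) (z : ℝ) :
    HasSum (fun x : ℤ => arr lam b x * z ^ x) (Real.exp (lam * b * (z - 1))) := by
  have hsupp : ∀ x ∉ Set.range ((↑) : ℕ → ℤ), arr lam b x * z ^ x = 0 := by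
    intro x hx
    have hneg : x < 0 := by
      by_contra! h
      exact hx ⟨x.toNat, Int.toNat_of_nonneg h⟩
    simp [arr, not_le.mpr hneg]
  rw [← Nat.cast_injective.hasSum_iff hsupp]
  have hexp := (NormedSpace.expSeries_div_hasSum_exp (lam * b * z)).mul_left
    (Real.exp (-(lam * b)))
  rw [← Real.exp_eq_exp_ℝ, ← Real.exp_add,
    show -(lam * b) + lam * b * z = lam * b * (z - 1) by ring] at hexp
  refine hexp.congr_fun fun n => ?_
  simp only [Function.comp_apply, arr_natCast, zpow_natCast, mul_pow]
  ring

lemma HasSum.comp_add_mul_zpow {K : Type*} [DivisionRing K] [TopologicalSpace K]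
    [IsTopologicalRing K] {f : ℤ → K} {a z : K} (hf : HasSum (fun x => f x * z ^ x) a)
    (hz : z ≠ 0) (m : ℤ) : HasSum (fun x => f (x + m) * z ^ x) (a * z ^ (-m)) := by
  refine (((Equiv.addRight m).hasSum_iff.mpr hf).mul_right (z ^ (-m))).congr_fun fun x => ?_
  rw [Equiv.coe_addRight, Function.comp_apply, mul_assoc, ← zpow_add₀ hz, add_neg_cancel_right]

lemma HasSum.mul_of_nonneg {ι κ : Type*} {f : ι → ℝ} {g : κ → ℝ} {s t : ℝ}
    (hf : HasSum f s) (hg : HasSum g t) (hf0 : 0 ≤ f) (hg0 : 0 ≤ g) :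
    HasSum (fun x : ι × κ => f x.1 * g x.2) (s * t) :=
  hf.mul hg (hf.summable.mul_of_nonneg hg.summable hf0 hg0)

lemma hasSum_arr_add_mul_arr_sub {lam1 lam2 : ℝ} (hl1 : 0 ≤ lam1) (hl2 : 0 ≤ lam2) (b : ℕ)
    {z1 z2 : ℝ} (hz1 : 0 < z1) (hz2 : 0 < z2) (m : ℤ) :
    HasSum (fun Δ : ℤ × ℤ => arr lam1 b (Δ.1 + m) * z1 ^ Δ.1 * (arr lam2 b (Δ.2 - m) * z2 ^ Δ.2))
      (Real.exp (lam1 * b * (z1 - 1)) * z1 ^ (-m) *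
        (Real.exp (lam2 * b * (z2 - 1)) * z2 ^ m)) := by
  have h1 := (hasSum_arr_mul_zpow lam1 b z1).comp_add_mul_zpow hz1.ne' m
  have h2 := (hasSum_arr_mul_zpow lam2 b z2).comp_add_mul_zpow hz2.ne' (-m)
  simp only [← sub_eq_add_neg, neg_neg] at h2
  exact h1.mul_of_nonneg h2 (fun x => mul_nonneg (arr_nonneg hl1 _ _) (zpow_pos hz1 x).le)
    (fun x => mul_nonneg (arr_nonneg hl2 _ _) (zpow_pos hz2 x).le)

lemma sum_range_succ_dHD_mul (p1 : ℝ) (N i1 : ℕ) (w : ℕ → ℝ) :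
    ∑ m ∈ range (i1 + 1), dHD p1 N i1 m * w m =
      ∑ m ∈ range i1, (N.choose m : ℝ) * (1 - p1) ^ m * p1 ^ (N - m) * w m +
        (∑ k ∈ Icc i1 N, (N.choose k : ℝ) * (1 - p1) ^ k * p1 ^ (N - k)) * w i1 := by
  rw [sum_range_succ, dHD, if_neg (lt_irrefl i1)]
  congr 1
  exact sum_congr rfl fun m hm => by rw [dHD, if_pos (mem_range.mp hm)]

theorem half_duplex_pgf_general (p1 lam1 lam2 : ℝ)
    (hl1 : 0 ≤ lam1) (hl2 : 0 ≤ lam2) (N i1 : ℕ) (z1 z2 : ℝ) (hz1 : 0 < z1) (hz2 : 0 < z2) :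
    HasSum (fun Δ : ℤ × ℤ => PHD p1 lam1 lam2 N i1 Δ * z1 ^ Δ.1 * z2 ^ Δ.2)
      (Real.exp (lam1 * N * (z1 - 1)) * Real.exp (lam2 * N * (z2 - 1)) *
        (∑ m ∈ Finset.range i1,
            (N.choose m : ℝ) * (1 - p1) ^ m * p1 ^ (N - m) * z1 ^ (-(m : ℤ)) * z2 ^ (m : ℤ)
          + (∑ m ∈ Finset.Icc i1 N, (N.choose m : ℝ) * (1 - p1) ^ m * p1 ^ (N - m)) *
              z1 ^ (-(i1 : ℤ)) * z2 ^ (i1 : ℤ))) := by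
  set E1 := Real.exp (lam1 * N * (z1 - 1))
  set E2 := Real.exp (lam2 * N * (z2 - 1))
  have hterms := fun m (_ : m ∈ range (i1 + 1)) =>
    (hasSum_arr_add_mul_arr_sub hl1 hl2 N hz1 hz2 m).mul_left (dHD p1 N i1 m)
  have hsum := hasSum_sum hterms
  rw [sum_range_succ_dHD_mul p1 N i1 fun m => E1 * z1 ^ (-(m : ℤ)) * (E2 * z2 ^ (m : ℤ))] at hsum
  refine cast (congrArg (HasSum _) ?_) (hsum.congr_fun fun Δ => ?_)
  · rw [mul_add, mul_sum]
    congr 1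
    · exact sum_congr rfl fun _ _ => by ring
    · ring
  · simp only [PHD, sum_mul]
    exact sum_congr rfl fun m _ => by ring

/-- PGF of the half-duplex inter-session state transition (Lemma 2). -/
theorem half_duplex_pgf (p1 lam1 lam2 : ℝ) (hp1 : p1 ∈ Set.Icc (0 : ℝ) 1)
    (hl1 : 0 ≤ lam1) (hl2 : 0 ≤ lam2) (N i1 : ℕ) (hN : 1 ≤ N)
    (hi1 : 1 ≤ i1) (hi1N : i1 ≤ N) (z1 z2 : ℝ) (hz1 : 0 < z1) (hz2 : 0 < z2) :
    HasSum (fun Δ : ℤ × ℤ => PHD p1 lam1 lam2 N i1 Δ * z1 ^ Δ.1 * z2 ^ Δ.2)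
      (Real.exp (lam1 * N * (z1 - 1)) * Real.exp (lam2 * N * (z2 - 1)) *
        (∑ m ∈ Finset.range i1,
            (N.choose m : ℝ) * (1 - p1) ^ m * p1 ^ (N - m) * z1 ^ (-(m : ℤ)) * z2 ^ (m : ℤ)
          + (∑ m ∈ Finset.Icc i1 N, (N.choose m : ℝ) * (1 - p1) ^ m * p1 ^ (N - m)) *
              z1 ^ (-(i1 : ℤ)) * z2 ^ (i1 : ℤ))) :=
  half_duplex_pgf_general p1 lam1 lam2 hl1 hl2 N i1 z1 z2 hz1 hz2
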